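/- Let $X$ be a Banach lattice, $T$ a positive operator on $X$ such that $\rho(T) = 1$ is a pole of the resolvent of order $p$, let $Q_{-p} = \lim_{\lambda \downarrow 1}(\lambda-1)^p R(\lambda,T)$ (norm limit), and suppose $S$ is a nonzero positive weakly compact order continuous operator commuting with $T$, and $T$ is band irreducible. Then $Q_{-p}$ is $\sigma$-order continuous: if $x_n \downarrow 0$ then $\inf_n Q_{-p}x_n = 0$. -/

import Mathlib

/-- A continuous linear operator `S` on a Banach space is weakly compact if
every bounded sequence has a subsequence whose image under `S` converges
weakly. -/
def WeaklyCompactOp {X : Type*} [NormedAddCommGroup X] [NormedSpace ℝ X]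
    (S : X →L[ℝ] X) : Prop :=
  ∀ x : ℕ → X, Bornology.IsBounded (Set.range x) →
    ∃ (σ : ℕ → ℕ) (y : X), StrictMono σ ∧
      ∀ f : X →L[ℝ] ℝ,
        Filter.Tendsto (fun n => f (S (x (σ n)))) Filter.atTop (nhds (f y))

/-!
If `0 ≤ y ≤ Q xₙ` for all `n`, then `S y ≤ Q (S xₙ)`. Weak compactness and order continuity
of `S` make a subsequence of `S xₙ` converge weakly to `0`, and the positive cone is weakly
closed, so `S y = 0`. Thus `y` lies in the null ideal `{v | S |v| = 0}` of `S`, which is a band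
(order continuity again), is `T`-invariant (as `S` commutes with the positive `T`) and is not
all of `X` (as `S ≠ 0`). Band irreducibility of `T` forces the null ideal to be `0`, so `y = 0`.
-/

open Filter Topology

section PositiveMap
variable {E F G : Type*} [AddCommGroup E] [Lattice E] [IsOrderedAddMonoid E]
  [AddCommGroup F] [Lattice F] [IsOrderedAddMonoid F] [FunLike G E F] [AddMonoidHomClass G E F]
  {f : G}

lemma monotone_of_map_nonneg (hf : ∀ x, 0 ≤ x → 0 ≤ f x) : Monotone f :=
  fun a b hab => sub_nonneg.1 (by simpa only [map_sub] using hf _ (sub_nonneg.2 hab))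

lemma map_eq_zero_of_le (hf : ∀ x, 0 ≤ x → 0 ≤ f x) {x y : E} (hx : 0 ≤ x) (hxy : x ≤ y)
    (hy : f y = 0) : f x = 0 :=
  le_antisymm (hy ▸ monotone_of_map_nonneg hf hxy) (hf x hx)

lemma abs_map_le_map_abs (hf : ∀ x, 0 ≤ x → 0 ≤ f x) (x : E) : |f x| ≤ f |x| :=
  abs_le'.2 ⟨monotone_of_map_nonneg hf (le_abs_self x),
    by simpa only [map_neg] using monotone_of_map_nonneg hf (neg_le_abs x)⟩

lemma map_eq_zero_of_map_abs_eq_zero (hf : ∀ x, 0 ≤ x → 0 ≤ f x) {x : E} (hx : f |x| = 0) :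
    f x = 0 := by
  have h := (abs_map_le_map_abs hf x).trans_eq hx
  exact le_antisymm ((le_abs_self _).trans h) (neg_nonpos.1 ((neg_le_abs _).trans h))

end PositiveMap

section LatticeModule
variable {𝕜 E : Type*} [AddCommGroup E] [Lattice E]

lemma inv_two_pow_smul_nonneg [IsOrderedAddMonoid E] [Field 𝕜] [NeZero (2 : 𝕜)] [Module 𝕜 E]
    {x : E} (hx : 0 ≤ x) (m : ℕ) : 0 ≤ ((2 : 𝕜) ^ m)⁻¹ • x := by
  induction m with
  | zero => simpa using hx
  | succ m ih =>
    apply nsmul_two_semiclosed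
    rwa [two_nsmul, ← two_smul 𝕜, smul_smul, pow_succ, mul_inv, mul_comm, mul_assoc,
      inv_mul_cancel₀ two_ne_zero, mul_one]

lemma abs_smul_le [Ring 𝕜] [LinearOrder 𝕜] [IsOrderedRing 𝕜] [Module 𝕜 E] [PosSMulMono 𝕜 E]
    (r : 𝕜) (x : E) : |r • x| ≤ |r| • |x| := by
  have key : ∀ z : E, r • z ≤ |r| • |z| := by
    intro z
    rcases le_or_gt 0 r with hr | hr
    · rw [abs_of_nonneg hr]
      exact smul_le_smul_of_nonneg_left (le_abs_self z) hr
    · rw [abs_of_neg hr, ← neg_smul_neg]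
      exact smul_le_smul_of_nonneg_left (neg_le_abs z) (neg_nonneg.2 hr.le)
  exact abs_le'.2 ⟨key x, by simpa only [smul_neg, abs_neg] using key (-x)⟩

variable [IsOrderedAddMonoid E]

lemma nsmul_le_inf_nsmul {a c z : E} (ha : 0 ≤ a) (hcz : c ≤ z)
    (hc : ∀ n : ℕ, c ≤ a - a ⊓ n • z) (n : ℕ) : n • c ≤ a ⊓ n • z := by
  induction n with
  | zero => simpa using ha
  | succ n ih =>
    rw [succ_nsmul, succ_nsmul]
    refine le_inf ?_ (add_le_add (ih.trans inf_le_right) hcz)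
    calc n • c + c ≤ a ⊓ n • z + (a - a ⊓ n • z) := add_le_add ih (hc n)
      _ = a := add_sub_cancel _ _

end LatticeModule

section NormedLattice
variable {X : Type*} [NormedAddCommGroup X] [Lattice X] [HasSolidNorm X] [IsOrderedAddMonoid X]

lemma isBounded_range_of_antitone {xs : ℕ → X} (hxs : Antitone xs) (h0 : ∀ n, 0 ≤ xs n) :
    Bornology.IsBounded (Set.range xs) := by
  refine isBounded_iff_forall_norm_le.2 ⟨‖xs 0‖, ?_⟩
  rintro _ ⟨n, rfl⟩
  refine norm_le_norm_of_abs_le_abs ?_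
  rw [abs_of_nonneg (h0 n), abs_of_nonneg (h0 0)]
  exact hxs n.zero_le

variable [NormedSpace ℝ X]

/-- The dyadic rationals act monotonically because a lattice-ordered group has no
order torsion (`nsmul_two_semiclosed`); closedness of the positive cone does the rest. -/
instance HasSolidNorm.posSMulMono : PosSMulMono ℝ X := by
  refine PosSMulMono.of_smul_nonneg fun r hr x hx => ?_
  have hdyadic : Tendsto (fun m : ℕ => (⌊r * 2 ^ m⌋₊ : ℝ) / 2 ^ m) atTop (𝓝 r) :=
    (tendsto_nat_floor_mul_div_atTop hr).comp (tendsto_pow_atTop_atTop_of_one_lt one_lt_two)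
  refine isClosed_nonneg.mem_of_tendsto (hdyadic.smul_const x) (.of_forall fun m => ?_)
  rw [Set.mem_ofPred_eq, div_eq_mul_inv, ← smul_smul, Nat.cast_smul_eq_nsmul]
  exact nsmul_nonneg (inv_two_pow_smul_nonneg hx m) _

lemma nonneg_of_forall_dual_nonneg {x : X}
    (h : ∀ f : X →L[ℝ] ℝ, (∀ z, 0 ≤ z → 0 ≤ f z) → 0 ≤ f x) : 0 ≤ x := by
  by_contra hx
  obtain ⟨f, hf, hfx⟩ :=
    (ProperCone.positive ℝ X).hyperplane_separation_point (x₀ := x) (by simpa using hx)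
  exact (h f fun z hz => hf z (by simpa using hz)).not_gt hfx

lemma ge_of_weakTendsto {ι : Type*} {l : Filter ι} [l.NeBot] {ys : ι → X} {w b : X}
    (hw : ∀ f : X →L[ℝ] ℝ, Tendsto (fun i => f (ys i)) l (𝓝 (f w)))
    (hb : ∀ᶠ i in l, b ≤ ys i) : b ≤ w := by
  refine sub_nonneg.1 (nonneg_of_forall_dual_nonneg fun f hf => ?_)
  rw [map_sub, sub_nonneg]
  exact ge_of_tendsto (hw f) (hb.mono fun i hi => monotone_of_map_nonneg hf hi)

lemma le_of_weakTendsto {ι : Type*} {l : Filter ι} [l.NeBot] {ys : ι → X} {w b : X}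
    (hw : ∀ f : X →L[ℝ] ℝ, Tendsto (fun i => f (ys i)) l (𝓝 (f w)))
    (hb : ∀ᶠ i in l, ys i ≤ b) : w ≤ b :=
  neg_le_neg_iff.1 <| ge_of_weakTendsto (ys := fun i => -ys i)
    (fun f => by simpa only [map_neg] using (hw f).neg) (hb.mono fun _ => neg_le_neg)

lemma eq_zero_of_forall_nsmul_le {a c : X} (hc : 0 ≤ c) (h : ∀ n : ℕ, n • c ≤ a) : c = 0 := by
  have hbound : ∀ n : ℕ, n * ‖c‖ ≤ ‖a‖ := fun n => by
    have ha : 0 ≤ a := by simpa using h 0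
    have := norm_le_norm_of_abs_le_abs (a := n • c) (b := a) (by
      rw [abs_of_nonneg (nsmul_nonneg hc n), abs_of_nonneg ha]; exact h n)
    rwa [RCLike.norm_nsmul ℝ, nsmul_eq_mul] at this
  by_contra hne
  obtain ⟨n, hn⟩ := exists_nat_gt (‖a‖ / ‖c‖)
  rw [div_lt_iff₀ (norm_pos_iff.2 hne)] at hn
  linarith [hbound n]

/-- If `a` lies in the double disjoint complement of `P`, then `a = ⨆ z ∈ P, a ⊓ z`. -/
lemma isGLB_sub_inf_of_disjoint {P : Set X} (hP0 : 0 ∈ P) (hP : ∀ z ∈ P, 0 ≤ z)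
    (hPnsmul : ∀ z ∈ P, ∀ n : ℕ, n • z ∈ P) {a : X} (ha : 0 ≤ a)
    (hdisj : ∀ w, 0 ≤ w → (∀ z ∈ P, w ⊓ z = 0) → a ⊓ w = 0) :
    IsGLB ((fun z => a - a ⊓ z) '' P) 0 := by
  refine ⟨?_, fun u hu => ?_⟩
  · rintro _ ⟨z, -, rfl⟩
    exact sub_nonneg.2 inf_le_left
  have hle : ∀ z ∈ P, u⁺ ≤ a - a ⊓ z := fun z hz =>
    sup_le (hu ⟨z, hz, rfl⟩) (sub_nonneg.2 inf_le_left)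
  have hua : u⁺ ≤ a := by simpa [inf_eq_right.2 ha] using hle 0 hP0
  have hperp : ∀ z ∈ P, u⁺ ⊓ z = 0 := fun z hz =>
    eq_zero_of_forall_nsmul_le (le_inf (posPart_nonneg u) (hP z hz)) fun n =>
      (nsmul_le_inf_nsmul ha inf_le_right
        (fun m => inf_le_left.trans (hle _ (hPnsmul z hz m))) n).trans inf_le_left
  have := hdisj u⁺ (posPart_nonneg u) hperp
  rw [inf_eq_right.2 hua] at this
  exact posPart_eq_zero.1 this

end NormedLattice

/-- Order continuity of an operator, in the form `x_α ↓ 0 ⇒ S x_α ↓ 0`; for positive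
operators this is the usual notion. -/
def IsOrderContinuous {E F : Type*} [Preorder E] [Zero E] [Preorder F] [Zero F] (f : E → F) :
    Prop :=
  ∀ D : Set E, D.Nonempty → DirectedOn (fun a b => b ≤ a) D → IsGLB D 0 → IsGLB (f '' D) 0

section NullIdeal
variable {X : Type*} [NormedAddCommGroup X] [Lattice X] [HasSolidNorm X]
  [IsOrderedAddMonoid X] [NormedSpace ℝ X]

variable (S : X →L[ℝ] X) (hS : ∀ x, 0 ≤ x → 0 ≤ S x)

/-- The largest ideal annihilated by the positive operator `S`. -/
def nullIdeal : Submodule ℝ X where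
  carrier := {v | S |v| = 0}
  add_mem' {u v} hu hv := map_eq_zero_of_le hS (abs_nonneg _) (abs_add_le u v) (by
    simp only [Set.mem_ofPred_eq] at hu hv
    rw [map_add, hu, hv, add_zero])
  zero_mem' := by simp
  smul_mem' r v hv := map_eq_zero_of_le hS (abs_nonneg _) (abs_smul_le r v) (by
    simp only [Set.mem_ofPred_eq] at hv
    rw [map_smul, hv, smul_zero])

variable {S hS}

lemma mem_nullIdeal {v : X} : v ∈ nullIdeal S hS ↔ S |v| = 0 := Iff.rfl

lemma mem_nullIdeal_of_abs_le {v w : X} (hv : v ∈ nullIdeal S hS) (hwv : |w| ≤ |v|) :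
    w ∈ nullIdeal S hS :=
  map_eq_zero_of_le hS (abs_nonneg w) hwv hv

lemma nullIdeal_ne_top (hS0 : S ≠ 0) : nullIdeal S hS ≠ ⊤ := fun htop =>
  hS0 <| ContinuousLinearMap.ext fun _ =>
    map_eq_zero_of_map_abs_eq_zero hS (mem_nullIdeal.1 (htop ▸ Submodule.mem_top))

lemma map_mem_nullIdeal {T : X →L[ℝ] X} (hT : ∀ x, 0 ≤ x → 0 ≤ T x) (hST : Commute S T)
    {v : X} (hv : v ∈ nullIdeal S hS) : T v ∈ nullIdeal S hS := by
  refine map_eq_zero_of_le hS (abs_nonneg _) (abs_map_le_map_abs hT v) ?_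
  rw [show S (T |v|) = T (S |v|) from DFunLike.congr_fun hST.eq |v|, mem_nullIdeal.1 hv, map_zero]

lemma mem_nullIdeal_of_disjoint (hSoc : IsOrderContinuous S) {x : X}
    (hx : ∀ w, (∀ v ∈ nullIdeal S hS, |w| ⊓ |v| = 0) → |x| ⊓ |w| = 0) :
    x ∈ nullIdeal S hS := by
  set P := {z | z ∈ nullIdeal S hS ∧ 0 ≤ z}
  have hP0 : (0 : X) ∈ P := ⟨zero_mem _, le_rfl⟩
  have hSP : ∀ z ∈ P, S (|x| ⊓ z) = 0 := fun z hz =>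
    map_eq_zero_of_le hS (le_inf (abs_nonneg x) hz.2) inf_le_right
      (abs_of_nonneg hz.2 ▸ mem_nullIdeal.1 hz.1)
  have hglb : IsGLB ((fun z => |x| - |x| ⊓ z) '' P) 0 := by
    refine isGLB_sub_inf_of_disjoint hP0 (fun z hz => hz.2)
      (fun z hz n => ⟨nsmul_mem hz.1 n, nsmul_nonneg hz.2 n⟩) (abs_nonneg x) fun w hw hwP => ?_
    have hw_perp : ∀ v ∈ nullIdeal S hS, |w| ⊓ |v| = 0 := fun v hv => by
      rw [abs_of_nonneg hw]
      exact hwP |v| ⟨mem_nullIdeal_of_abs_le hv (abs_abs v).le, abs_nonneg v⟩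
    simpa only [abs_of_nonneg hw] using hx w hw_perp
  have hdir : DirectedOn (fun a b => b ≤ a) ((fun z => |x| - |x| ⊓ z) '' P) := by
    rintro _ ⟨z₁, hz₁, rfl⟩ _ ⟨z₂, hz₂, rfl⟩
    refine ⟨_, ⟨z₁ + z₂, ⟨add_mem hz₁.1 hz₂.1, add_nonneg hz₁.2 hz₂.2⟩, rfl⟩, ?_, ?_⟩ <;>
      refine sub_le_sub_left (inf_le_inf_left _ ?_) _
    exacts [le_add_of_nonneg_right hz₂.2, le_add_of_nonneg_left hz₁.2]
  have hSglb := hSoc _ (Set.Nonempty.image _ ⟨0, hP0⟩) hdir hglb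
  refine le_antisymm (hSglb.2 ?_) (hS _ (abs_nonneg x))
  rintro _ ⟨_, ⟨z, hz, rfl⟩, rfl⟩
  simp [hSP z hz]

end NullIdeal

section WeaklyCompact
variable {X : Type*} [NormedAddCommGroup X] [Lattice X] [HasSolidNorm X]
  [IsOrderedAddMonoid X] [NormedSpace ℝ X] {S : X →L[ℝ] X} {xs : ℕ → X}

lemma exists_subseq_weakTendsto_zero (hS : ∀ x, 0 ≤ x → 0 ≤ S x) (hSwc : WeaklyCompactOp S)
    (hSoc : IsOrderContinuous S) (hxs : Antitone xs) (hglb : IsGLB (Set.range xs) 0) :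
    ∃ σ : ℕ → ℕ, StrictMono σ ∧
      ∀ f : X →L[ℝ] ℝ, Tendsto (fun n => f (S (xs (σ n)))) atTop (𝓝 0) := by
  have h0 : ∀ n, 0 ≤ xs n := fun n => hglb.1 ⟨n, rfl⟩
  obtain ⟨σ, w, hσ, hw⟩ := hSwc xs (isBounded_range_of_antitone hxs h0)
  have hSglb := hSoc _ (Set.range_nonempty xs) (directedOn_range.2 hxs.directed_ge) hglb
  have hw0 : w = 0 := by
    refine le_antisymm (hSglb.2 ?_) (ge_of_weakTendsto hw (.of_forall fun n => hS _ (h0 _)))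
    rintro _ ⟨_, ⟨m, rfl⟩, rfl⟩
    exact le_of_weakTendsto hw ((eventually_ge_atTop m).mono fun n hn =>
      monotone_of_map_nonneg hS (hxs (hn.trans hσ.le_apply)))
  subst hw0
  exact ⟨σ, hσ, fun f => by simpa using hw f⟩

lemma map_eq_zero_of_mem_lowerBounds (hS : ∀ x, 0 ≤ x → 0 ≤ S x) (hSwc : WeaklyCompactOp S)
    (hSoc : IsOrderContinuous S) {Q : X →L[ℝ] X} (hSQ : Commute S Q) (hxs : Antitone xs)
    (hglb : IsGLB (Set.range xs) 0) {y : X} (hy0 : 0 ≤ y)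
    (hy : y ∈ lowerBounds (Set.range fun n => Q (xs n))) : S y = 0 := by
  obtain ⟨σ, -, hσ⟩ := exists_subseq_weakTendsto_zero hS hSwc hSoc hxs hglb
  refine le_antisymm (ge_of_weakTendsto (ys := fun n => Q (S (xs (σ n)))) (w := 0)
    (fun f => by simpa using hσ (f.comp Q)) (.of_forall fun n => ?_)) (hS y hy0)
  rw [← show S (Q (xs (σ n))) = Q (S (xs (σ n))) from DFunLike.congr_fun hSQ.eq _]
  exact monotone_of_map_nonneg hS (hy ⟨σ n, rfl⟩)

end WeaklyCompact

theorem stmt17 {X : Type*} [NormedAddCommGroup X] [Lattice X] [HasSolidNorm X]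
    [IsOrderedAddMonoid X] [NormedSpace ℝ X]
    (T Q S : X →L[ℝ] X)
    (hT : ∀ x : X, 0 ≤ x → 0 ≤ T x)
    (hQpos : ∀ x : X, 0 ≤ x → 0 ≤ Q x)
    -- `T` is band irreducible:
    (hirr : ¬ ∃ 𝔅 : Submodule ℝ X,
        (∀ x ∈ 𝔅, ∀ y : X, |y| ≤ |x| → y ∈ 𝔅) ∧
        (∀ y : X, (∀ w : X, (∀ v ∈ 𝔅, |w| ⊓ |v| = 0) → |y| ⊓ |w| = 0) → y ∈ 𝔅) ∧
        𝔅 ≠ ⊥ ∧ 𝔅 ≠ ⊤ ∧ (∀ x ∈ 𝔅, T x ∈ 𝔅))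
    -- `S` is nonzero, positive, weakly compact, order continuous, and commutes
    -- with `T` (and with `Q`):
    (hS0 : S ≠ 0)
    (hSpos : ∀ x : X, 0 ≤ x → 0 ≤ S x)
    (hSwc : WeaklyCompactOp S)
    (hSoc : ∀ D : Set X, D.Nonempty → DirectedOn (fun a b => b ≤ a) D →
      IsGLB D 0 → IsGLB ((fun a => S a) '' D) 0)
    (hST : Commute S T) (hSQ : Commute S Q) :
    ∀ xs : ℕ → X, Antitone xs → IsGLB (Set.range xs) 0 →
      IsGLB (Set.range fun n => Q (xs n)) 0 := by
  intro xs hxs hglb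
  have hQxs : ∀ n, 0 ≤ Q (xs n) := fun n => hQpos _ (hglb.1 ⟨n, rfl⟩)
  refine ⟨?_, fun b hb => ?_⟩
  · rintro _ ⟨n, rfl⟩
    exact hQxs n
  have hb : b⁺ ∈ lowerBounds (Set.range fun n => Q (xs n)) := by
    rintro _ ⟨n, rfl⟩
    exact sup_le (hb ⟨n, rfl⟩) (hQxs n)
  have hbS : b⁺ ∈ nullIdeal S hSpos := by
    rw [mem_nullIdeal, abs_of_nonneg (posPart_nonneg b)]
    exact map_eq_zero_of_mem_lowerBounds hSpos hSwc hSoc hSQ hxs hglb (posPart_nonneg b) hb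
  have hbot : nullIdeal S hSpos = ⊥ := by
    by_contra hne
    exact hirr ⟨nullIdeal S hSpos, fun _ hv _ => mem_nullIdeal_of_abs_le hv,
      fun _ => mem_nullIdeal_of_disjoint hSoc, hne, nullIdeal_ne_top hS0,
      fun _ => map_mem_nullIdeal hT hST⟩
  rw [hbot, Submodule.mem_bot] at hbS
  exact posPart_eq_zero.1 hbS
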